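/- Fix a non-zero polynomial p on ℂⁿ and A > 0. Then there exists a constant c_A > 0 depending only on p and A such that for every entire function F on ℂⁿ with sup_{z} |p(z)F(z)| e^{-A|z|} < ∞, one has sup_{z} |F(z)| e^{-√n·A|z|} ≤ c_A · sup_{z} |p(z)F(z)| e^{-A|z|}. -/

import Mathlib

/-!
Choose a direction `v` on which the top homogeneous component `p_d` of `p` (with
`d = totalDegree p`) does not vanish. For every `z`, `t ↦ p (t • v + z)` is a one-variable
polynomial of degree `d` with leading coefficient `p_d v`. Reflecting its roots in the unit
circle gives a polynomial with the same modulus on `‖t‖ = 1` and value of modulus `‖p_d v‖`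
at `0`, so the maximum modulus principle applied to its product with `t ↦ F (t • v + z)` yields
`‖p_d v‖ * ‖F z‖ ≤ sup_{‖t‖ = 1} ‖(p * F) (t • v + z)‖ ≤ M * exp (A * (‖z‖ + ‖v‖))`.
-/

/-- The Euclidean norm on ℂⁿ. -/
noncomputable def enorm' {n : ℕ} (z : Fin n → ℂ) : ℝ :=
  Real.sqrt (∑ i, ‖z i‖ ^ 2)

open scoped Polynomial ComplexConjugate

lemma Complex.norm_sub_eq_norm_one_sub_conj_mul {t : ℂ} (ht : ‖t‖ = 1) (r : ℂ) :
    ‖t - r‖ = ‖1 - conj r * t‖ := by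
  have ht' : t * conj t = 1 := by
    rw [Complex.mul_conj, Complex.normSq_eq_norm_sq, ht]; norm_num
  calc ‖t - r‖ = ‖t * conj (1 - conj r * t)‖ := by
        congr 1; simp only [map_sub, map_one, map_mul, Complex.conj_conj]
        linear_combination r * ht'
    _ = ‖1 - conj r * t‖ := by rw [norm_mul, ht, one_mul, Complex.norm_conj]

namespace Polynomial

/-- `q` with every root `r` replaced by its reflection `1 / conj r` in the unit circle. -/
noncomputable def reflectRoots (q : ℂ[X]) : ℂ[X] :=
  C q.leadingCoeff * (q.roots.map fun r => 1 - C (conj r) * X).prod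

lemma eval_zero_reflectRoots (q : ℂ[X]) : (reflectRoots q).eval 0 = q.leadingCoeff := by
  simp [reflectRoots, eval_multiset_prod]

lemma norm_eval_reflectRoots (q : ℂ[X]) {t : ℂ} (ht : ‖t‖ = 1) :
    ‖(reflectRoots q).eval t‖ = ‖q.eval t‖ := by
  have norm_prod (m : Multiset ℂ) : ‖m.prod‖ = (m.map (‖·‖)).prod :=
    map_multiset_prod normHom m
  rw [(IsAlgClosed.splits q).eval_eq_prod_roots, reflectRoots, eval_mul, eval_C,
    eval_multiset_prod, norm_mul, norm_mul, norm_prod, norm_prod, Multiset.map_map,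
    Multiset.map_map, Multiset.map_map]
  congr 2
  refine Multiset.map_congr rfl fun r _ => ?_
  simp [Complex.norm_sub_eq_norm_one_sub_conj_mul ht]

theorem norm_leadingCoeff_mul_le_of_forall_norm_eq_one (q : ℂ[X]) {f : ℂ → ℂ}
    (hf : DiffContOnCl ℂ f (Metric.ball 0 1)) {M : ℝ}
    (hM : ∀ t : ℂ, ‖t‖ = 1 → ‖q.eval t * f t‖ ≤ M) :
    ‖q.leadingCoeff‖ * ‖f 0‖ ≤ M := by
  rw [← eval_zero_reflectRoots, ← norm_mul]
  refine Complex.norm_le_of_forall_mem_frontier_norm_le Metric.isBounded_ball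
    ((reflectRoots q).differentiable.diffContOnCl.smul hf) (fun t ht => ?_) (z := 0)
    (subset_closure (Metric.mem_ball_self one_pos))
  rw [frontier_ball 0 one_ne_zero, mem_sphere_zero_iff_norm] at ht
  rw [smul_eq_mul, norm_mul, norm_eval_reflectRoots q ht, ← norm_mul]
  exact hM t ht

theorem norm_coeff_mul_le_of_forall_norm_eq_one {q : ℂ[X]} {d : ℕ} (hq : q.natDegree ≤ d)
    {f : ℂ → ℂ} (hf : DiffContOnCl ℂ f (Metric.ball 0 1)) {M : ℝ}
    (hM : ∀ t : ℂ, ‖t‖ = 1 → ‖q.eval t * f t‖ ≤ M) :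
    ‖q.coeff d‖ * ‖f 0‖ ≤ M := by
  rcases hq.eq_or_lt with rfl | hlt
  · exact norm_leadingCoeff_mul_le_of_forall_norm_eq_one q hf hM
  · rw [coeff_eq_zero_of_natDegree_lt hlt, norm_zero, zero_mul]
    exact (norm_nonneg _).trans (hM 1 norm_one)

end Polynomial

namespace Finsupp

variable {σ : Type*}

lemma prod_toMultiset_map {M : Type*} [CommMonoid M] (g : σ → M) (a : σ →₀ ℕ) :
    (a.toMultiset.map g).prod = a.prod fun i k => g i ^ k := by
  rw [toMultiset_map, prod_toMultiset,
    prod_mapDomain_index (fun _ => pow_zero _) (fun _ _ _ => pow_add _ _ _)]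

lemma card_toMultiset_eq_degree (a : σ →₀ ℕ) : Multiset.card a.toMultiset = a.degree := by
  rw [card_toMultiset, degree_apply]
  rfl

end Finsupp

namespace MvPolynomial

variable {σ R : Type*} [CommSemiring R] {L : σ → R[X]}

lemma natDegree_aeval_monomial_le (hL : ∀ i, (L i).natDegree ≤ 1) (a : σ →₀ ℕ) (c : R) :
    (aeval L (monomial a c)).natDegree ≤ a.degree := by
  rw [aeval_monomial, ← Finsupp.prod_toMultiset_map, Polynomial.algebraMap_eq]
  refine (Polynomial.natDegree_C_mul_le _ _).trans <|
    (Polynomial.natDegree_multiset_prod_le _).trans ?_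
  have h := Multiset.sum_le_card_nsmul ((a.toMultiset.map L).map Polynomial.natDegree) 1
    (by simpa using fun i _ => hL i)
  simpa only [Multiset.card_map, Finsupp.card_toMultiset_eq_degree, smul_eq_mul, mul_one] using h

lemma coeff_aeval_monomial_degree (hL : ∀ i, (L i).natDegree ≤ 1) (a : σ →₀ ℕ) (c : R) :
    (aeval L (monomial a c)).coeff a.degree = eval (fun i => (L i).coeff 1) (monomial a c) := by
  have h := Polynomial.coeff_multiset_prod_of_natDegree_le (a.toMultiset.map L) 1
    (by simpa using fun i _ => hL i)
  rw [Multiset.card_map, Finsupp.card_toMultiset_eq_degree, mul_one, Multiset.map_map] at h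
  rw [aeval_monomial, ← Finsupp.prod_toMultiset_map, Polynomial.algebraMap_eq,
    Polynomial.coeff_C_mul, h, eval_monomial, ← Finsupp.prod_toMultiset_map]
  rfl

lemma natDegree_aeval_le_totalDegree (hL : ∀ i, (L i).natDegree ≤ 1) (p : MvPolynomial σ R) :
    (aeval L p).natDegree ≤ p.totalDegree := by
  conv_lhs => rw [← p.support_sum_monomial_coeff, map_sum]
  exact Polynomial.natDegree_sum_le_of_forall_le _ _ fun a ha =>
    (natDegree_aeval_monomial_le hL a _).trans (le_totalDegree ha)

lemma coeff_aeval_totalDegree (hL : ∀ i, (L i).natDegree ≤ 1) (p : MvPolynomial σ R) :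
    (aeval L p).coeff p.totalDegree =
      eval (fun i => (L i).coeff 1) (homogeneousComponent p.totalDegree p) := by
  classical
  have hsum : aeval L p = ∑ a ∈ p.support, aeval L (monomial a (coeff a p)) := by
    rw [← map_sum, p.support_sum_monomial_coeff]
  rw [hsum, Polynomial.finsetSum_coeff, homogeneousComponent_apply, map_sum, Finset.sum_filter]
  refine Finset.sum_congr rfl fun a ha => ?_
  split_ifs with had
  · rw [← had, coeff_aeval_monomial_degree hL]
  · exact Polynomial.coeff_eq_zero_of_natDegree_lt <|
      (natDegree_aeval_monomial_le hL a _).trans_lt <| (le_totalDegree ha).lt_of_ne had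

lemma homogeneousComponent_totalDegree_ne_zero {p : MvPolynomial σ R} (hp : p ≠ 0) :
    homogeneousComponent p.totalDegree p ≠ 0 := by
  obtain ⟨a, ha, had⟩ := Finset.exists_mem_eq_sup p.support (support_nonempty.mpr hp)
    fun s => s.sum fun _ e => e
  intro h
  have hc := coeff_homogeneousComponent (n := p.totalDegree) (φ := p) a
  rw [h, coeff_zero, if_pos (by exact had.symm)] at hc
  exact mem_support_iff.mp ha hc.symm

lemma polynomial_eval_aeval (L : σ → R[X]) (p : MvPolynomial σ R) (t : R) :
    (aeval L p).eval t = eval (fun i => (L i).eval t) p := by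
  rw [← Polynomial.coe_aeval_eq_eval, ← AlgHom.comp_apply, comp_aeval]
  rfl

lemma exists_eval_ne_zero {R : Type*} [CommRing R] [IsDomain R] [Infinite R]
    {p : MvPolynomial σ R} (hp : p ≠ 0) : ∃ v, eval v p ≠ 0 := by
  by_contra! h
  exact hp (funext fun v => by simp [h v])

end MvPolynomial

open MvPolynomial in
theorem norm_eval_homogeneousComponent_totalDegree_mul_le {σ : Type*} [Fintype σ]
    (p : MvPolynomial σ ℂ) {F : (σ → ℂ) → ℂ} (hF : Differentiable ℂ F) (z v : σ → ℂ) {M : ℝ}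
    (hM : ∀ t : ℂ, ‖t‖ = 1 → ‖eval (t • v + z) p * F (t • v + z)‖ ≤ M) :
    ‖eval v (homogeneousComponent p.totalDegree p)‖ * ‖F z‖ ≤ M := by
  set L : σ → ℂ[X] := fun i => Polynomial.C (v i) * Polynomial.X + Polynomial.C (z i)
  have hL (i : σ) : (L i).natDegree ≤ 1 := Polynomial.natDegree_linear_le
  have hv : (fun i => (L i).coeff 1) = v := by ext; simp [L]
  have hline (t : ℂ) : (fun i => (L i).eval t) = t • v + z := by
    ext i
    simp only [L, Polynomial.eval_add, Polynomial.eval_mul, Polynomial.eval_C, Polynomial.eval_X,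
      Pi.add_apply, Pi.smul_apply, smul_eq_mul, mul_comm]
  have hf : Differentiable ℂ fun t : ℂ => F (t • v + z) :=
    hF.comp ((differentiable_id.smul_const v).add_const z)
  have key := Polynomial.norm_coeff_mul_le_of_forall_norm_eq_one
    (natDegree_aeval_le_totalDegree hL p) hf.diffContOnCl
    (by simpa only [polynomial_eval_aeval, hline] using hM)
  rwa [coeff_aeval_totalDegree hL, hv, zero_smul, zero_add] at key

lemma enorm'_eq_norm_toLp {n : ℕ} (z : Fin n → ℂ) :
    enorm' z = ‖WithLp.toLp 2 z‖ := by
  rw [EuclideanSpace.norm_eq]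
  rfl

lemma enorm'_smul_add_le {n : ℕ} (t : ℂ) (v z : Fin n → ℂ) :
    enorm' (t • v + z) ≤ ‖t‖ * enorm' v + enorm' z := by
  simp only [enorm'_eq_norm_toLp, WithLp.toLp_add, WithLp.toLp_smul, ← norm_smul]
  exact norm_add_le _ _

lemma enorm'_le_sqrt_mul {n : ℕ} (z : Fin n → ℂ) : enorm' z ≤ √n * enorm' z := by
  rcases n.eq_zero_or_pos with rfl | hn
  · simp [enorm']
  · exact le_mul_of_one_le_left (Real.sqrt_nonneg _)
      (Real.one_le_sqrt.mpr (by exact_mod_cast hn))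

open MvPolynomial in
theorem stmt_4 {n : ℕ} (p : MvPolynomial (Fin n) ℂ) (hp : p ≠ 0) (A : ℝ) (hA : 0 < A) :
    ∃ c : ℝ, 0 < c ∧ ∀ F : (Fin n → ℂ) → ℂ, Differentiable ℂ F →
      ∀ M : ℝ,
        (∀ z, ‖MvPolynomial.eval z p * F z‖ * Real.exp (-(A * enorm' z)) ≤ M) →
        ∀ z, ‖F z‖ * Real.exp (-(Real.sqrt n * A * enorm' z)) ≤ c * M := by
  obtain ⟨v, hv⟩ := exists_eval_ne_zero (homogeneousComponent_totalDegree_ne_zero hp)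
  set a := ‖eval v (homogeneousComponent p.totalDegree p)‖
  have ha : 0 < a := norm_pos_iff.mpr hv
  refine ⟨Real.exp (A * enorm' v) / a, by positivity, fun F hF M hM z => ?_⟩
  have hM0 : 0 ≤ M := (mul_nonneg (norm_nonneg _) (Real.exp_pos _).le).trans (hM 0)
  have hpF (w : Fin n → ℂ) : ‖eval w p * F w‖ ≤ M * Real.exp (A * enorm' w) := by
    simpa only [Real.exp_neg, ← div_eq_mul_inv, div_le_iff₀ (Real.exp_pos _)] using hM w
  have key : a * ‖F z‖ ≤ M * Real.exp (A * enorm' v + A * enorm' z) :=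
    norm_eval_homogeneousComponent_totalDegree_mul_le p hF z v fun t ht =>
      (hpF _).trans <| by
        have hw := enorm'_smul_add_le t v z
        rw [ht, one_mul] at hw
        gcongr
        linarith [mul_le_mul_of_nonneg_left hw hA.le]
  calc ‖F z‖ * Real.exp (-(Real.sqrt n * A * enorm' z))
      ≤ ‖F z‖ * Real.exp (-(A * enorm' z)) := by
        gcongr ‖F z‖ * Real.exp (-?_)
        linarith [mul_le_mul_of_nonneg_left (enorm'_le_sqrt_mul z) hA.le]
    _ ≤ M * Real.exp (A * enorm' v + A * enorm' z) / a * Real.exp (-(A * enorm' z)) := by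
        gcongr
        rwa [le_div_iff₀ ha, mul_comm]
    _ = Real.exp (A * enorm' v) / a * M := by
        rw [Real.exp_add, Real.exp_neg]
        field_simp
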